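/- arXiv:2009.06954 — 3 statements merged into one kernel-verified Lean document; each statement's English description precedes it below -/
import Mathlib

section
/- Let D ∈ ℝ^{n×n} be symmetric and invertible with spectral decomposition D = VΛVᵀ (V orthogonal, Λ diagonal with nonzero entries), let |D| := V|Λ|Vᵀ, and let |D| = L·Lᵀ with L invertible. Then the matrix M_r := L⁻¹·D·L⁻ᵀ − I is symmetric, satisfies M_r² = −2·M_r (so every eigenvalue of M_r is 0 or −2), and the rank of M_r equals the number of negative eigenvalues of D (counted with multiplicity). -/
/-!
Since `V` is orthogonal, `D = V Λ Vᵀ` and `|D| = V |Λ| Vᵀ = L Lᵀ` commute and `D² = |D|²`, so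
`D |D|⁻¹ D = |D|`. Hence `A := L⁻¹ D L⁻ᵀ` satisfies `A² = L⁻¹ D (L Lᵀ)⁻¹ D L⁻ᵀ = 1`, and
`M_r = A - 1` satisfies `M_r² = -2 M_r`. Moreover `M_r = L⁻¹ (D - |D|) L⁻ᵀ` with
`D - |D| = V diag(λ - |λ|) Vᵀ`, whose rank is the number of negative `λᵢ`.
-/

open Matrix Polynomial

theorem spectrum_subset_of_sq_eq_smul {𝕜 A : Type*} [Field 𝕜] [Ring A] [Algebra 𝕜 A]
    {a : A} {c : 𝕜} (h : a ^ 2 = c • a) : spectrum 𝕜 a ⊆ {0, c} := by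
  intro μ hμ
  rcases subsingleton_or_nontrivial A with hA | hA
  · simp [spectrum.of_subsingleton] at hμ
  have hmem := spectrum.subset_polynomial_aeval a (X ^ 2 - C c * X) ⟨μ, hμ, rfl⟩
  have hzero : aeval a (X ^ 2 - C c * X : 𝕜[X]) = 0 := by
    simp [h, Algebra.smul_def]
  rw [hzero, spectrum.zero_eq, Set.mem_singleton_iff] at hmem
  have hroot : μ * (μ - c) = 0 := by
    simp only [eval_sub, eval_pow, eval_X, eval_mul, eval_C] at hmem
    linear_combination hmem
  rcases mul_eq_zero.mp hroot with h | h
  · exact .inl h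
  · exact .inr (sub_eq_zero.mp h)

theorem sub_one_sq_eq_smul_of_mul_self_eq_one {R A : Type*} [CommRing R] [Ring A]
    [Algebra R A] {a : A} (h : a * a = 1) : (a - 1) ^ 2 = (-2 : R) • (a - 1) := by
  rw [sq, sub_mul, mul_sub, h, neg_smul, two_smul]
  simp only [mul_one, one_mul]
  abel

namespace Matrix

variable {ι R : Type*} [Fintype ι] [DecidableEq ι]

section CommRing

variable [CommRing R]

theorem conj_diagonal_mul_conj_diagonal {V : Matrix ι ι R} (hV : Vᵀ * V = 1) (a b : ι → R) :
    V * diagonal a * Vᵀ * (V * diagonal b * Vᵀ) = V * diagonal (a * b) * Vᵀ := by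
  simp only [Matrix.mul_assoc]
  rw [← Matrix.mul_assoc Vᵀ V, hV, Matrix.one_mul, ← Matrix.mul_assoc (diagonal a),
    diagonal_mul_diagonal]
  rfl

theorem conj_diagonal_sub (V : Matrix ι ι R) (a b : ι → R) :
    V * diagonal a * Vᵀ - V * diagonal b * Vᵀ = V * diagonal (a - b) * Vᵀ := by
  rw [← Matrix.sub_mul, ← Matrix.mul_sub, diagonal_sub]
  rfl

theorem inv_mul_mul_transpose_inv_sub_one {L : Matrix ι ι R} (hL : IsUnit L.det)
    (S : Matrix ι ι R) : L⁻¹ * S * Lᵀ⁻¹ - 1 = L⁻¹ * (S - L * Lᵀ) * Lᵀ⁻¹ := by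
  rw [Matrix.mul_sub, Matrix.sub_mul, nonsing_inv_mul_cancel_left L _ hL,
    mul_nonsing_inv Lᵀ (by rwa [det_transpose])]

theorem inv_mul_mul_transpose_inv_mul_self {S L : Matrix ι ι R} (hL : IsUnit L.det)
    (hcomm : Commute S (L * Lᵀ)) (hsq : S * S = L * Lᵀ * (L * Lᵀ)) :
    L⁻¹ * S * Lᵀ⁻¹ * (L⁻¹ * S * Lᵀ⁻¹) = 1 := by
  set P := L * Lᵀ
  have hP : IsUnit P.det := by simpa [P, det_mul] using hL.mul hL
  have hSPS : S * P⁻¹ * S = P := by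
    calc S * P⁻¹ * S = P⁻¹ * (P * S) * P⁻¹ * S := by
          rw [nonsing_inv_mul_cancel_left P S hP]
      _ = P⁻¹ * (S * S) := by
          simp only [← hcomm.eq, Matrix.mul_assoc, mul_nonsing_inv_cancel_left P S hP]
      _ = P := by
          rw [hsq, ← Matrix.mul_assoc, nonsing_inv_mul P hP, Matrix.one_mul]
  calc L⁻¹ * S * Lᵀ⁻¹ * (L⁻¹ * S * Lᵀ⁻¹) = L⁻¹ * (S * (Lᵀ⁻¹ * L⁻¹) * S) * Lᵀ⁻¹ := by
        simp only [Matrix.mul_assoc]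
    _ = 1 := by
        rw [← mul_inv_rev, hSPS, nonsing_inv_mul_cancel_left L _ hL,
          mul_nonsing_inv Lᵀ (by rwa [det_transpose])]

theorem rank_mul_mul_of_isUnit_det {A C : Matrix ι ι R} (hA : IsUnit A.det) (hC : IsUnit C.det)
    (B : Matrix ι ι R) : (A * B * C).rank = B.rank := by
  rw [rank_mul_eq_left_of_isUnit_det _ _ hC, rank_mul_eq_right_of_isUnit_det _ _ hA]

end CommRing

theorem rank_conj_diagonal [Field R] [DecidableEq R] {V : Matrix ι ι R} (hV : Vᵀ * V = 1)
    (a : ι → R) : (V * diagonal a * Vᵀ).rank = Fintype.card {i // a i ≠ 0} := by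
  rw [rank_mul_mul_of_isUnit_det (isUnit_det_of_left_inverse hV)
    (isUnit_det_of_right_inverse hV), rank_diagonal]

end Matrix

theorem sub_abs_ne_zero_iff {α : Type*} [AddCommGroup α] [LinearOrder α] [IsOrderedAddMonoid α]
    {a : α} : a - |a| ≠ 0 ↔ a < 0 := by
  rw [Ne, sub_eq_zero, eq_comm, abs_eq_self, not_le]

theorem stmt_6_general {n : ℕ} (D V L : Matrix (Fin n) (Fin n) ℝ) (d : Fin n → ℝ)
    (hDsym : Dᵀ = D)
    (hV : Vᵀ * V = 1) (hspec : D = V * Matrix.diagonal d * Vᵀ)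
    (hL : IsUnit L.det)
    (hChol : V * Matrix.diagonal (fun i => |d i|) * Vᵀ = L * Lᵀ)
    (Mr : Matrix (Fin n) (Fin n) ℝ) (hMr : Mr = L⁻¹ * D * (Lᵀ)⁻¹ - 1) :
    Mrᵀ = Mr ∧
      Mr ^ 2 = (-2 : ℝ) • Mr ∧
      (∀ μ ∈ spectrum ℝ Mr, μ = 0 ∨ μ = -2) ∧
      Mr.rank = Fintype.card {i : Fin n // d i < 0} := by
  have hcomm : Commute D (L * Lᵀ) := by
    rw [Commute, SemiconjBy, hspec, ← hChol, conj_diagonal_mul_conj_diagonal hV,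
      conj_diagonal_mul_conj_diagonal hV, mul_comm]
  have hDsq : D * D = L * Lᵀ * (L * Lᵀ) := by
    have hdsq : d * d = (fun i => |d i|) * fun i => |d i| :=
      funext fun i => (abs_mul_abs_self (d i)).symm
    rw [hspec, ← hChol, conj_diagonal_mul_conj_diagonal hV, conj_diagonal_mul_conj_diagonal hV,
      hdsq]
  have hsq : Mr ^ 2 = (-2 : ℝ) • Mr := by
    rw [hMr]
    exact sub_one_sq_eq_smul_of_mul_self_eq_one (inv_mul_mul_transpose_inv_mul_self hL hcomm hDsq)
  refine ⟨?_, hsq, fun μ hμ => spectrum_subset_of_sq_eq_smul hsq hμ, ?_⟩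
  · rw [hMr, transpose_sub, transpose_one, transpose_mul, transpose_mul, transpose_nonsing_inv,
      transpose_nonsing_inv, hDsym, transpose_transpose, Matrix.mul_assoc]
  · have hLT : IsUnit Lᵀ⁻¹.det := by
      rw [det_nonsing_inv, det_transpose]
      exact hL.ringInverse
    rw [hMr, inv_mul_mul_transpose_inv_sub_one hL, hspec, ← hChol, conj_diagonal_sub,
      rank_mul_mul_of_isUnit_det (isUnit_nonsing_inv_det L hL) hLT, rank_conj_diagonal hV]
    exact Fintype.card_congr (Equiv.subtypeEquivRight fun i => sub_abs_ne_zero_iff)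

theorem stmt_6 {n : ℕ} (D V L : Matrix (Fin n) (Fin n) ℝ) (d : Fin n → ℝ)
    (hDsym : Dᵀ = D) (hDinv : IsUnit D.det)
    (hV : Vᵀ * V = 1) (hspec : D = V * Matrix.diagonal d * Vᵀ)
    (hd : ∀ i, d i ≠ 0)
    (hL : IsUnit L.det)
    (hChol : V * Matrix.diagonal (fun i => |d i|) * Vᵀ = L * Lᵀ)
    (Mr : Matrix (Fin n) (Fin n) ℝ) (hMr : Mr = L⁻¹ * D * (Lᵀ)⁻¹ - 1) :
    Mrᵀ = Mr ∧
      Mr ^ 2 = (-2 : ℝ) • Mr ∧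
      (∀ μ ∈ spectrum ℝ Mr, μ = 0 ∨ μ = -2) ∧
      Mr.rank = Fintype.card {i : Fin n // d i < 0} :=
  stmt_6_general D V L d hDsym hV hspec hL hChol Mr hMr
end

section
/- Let D ∈ ℝ^{2×2} be symmetric with det D < 0 (so D has one positive and one negative eigenvalue), let |D| := V|Λ|Vᵀ for a spectral decomposition D = VΛVᵀ, and let |D| = L·Lᵀ with L invertible. Then the eigenvalues of the symmetric matrix L⁻¹·D·L⁻ᵀ − I are exactly −2 and 0. Similarly, if d < 0 is a scalar and ℓ = √(−d), then ℓ⁻¹·d·ℓ⁻¹ − 1 = −2. -/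
/-!
Conjugating by `L` shows that `L⁻¹ D L⁻ᵀ - 1` is similar to `D (L Lᵀ)⁻¹ - 1 = D |D|⁻¹ - 1`,
and in the eigenbasis `V` this is `diagonal (dᵢ / |dᵢ| - 1)`. Its eigenvalues are therefore
`sign dᵢ - 1 ∈ {-2, 0}`, and `det D = d₀ d₁ < 0` forces one eigenvalue of each sign.
-/

open Matrix

namespace Matrix

variable {n K : Type*} [Fintype n] [DecidableEq n]

section CommRing

variable [CommRing K]

theorem spectrum_mul_mul_nonsing_inv {P : Matrix n n K} (hP : IsUnit P.det) (A : Matrix n n K) :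
    spectrum K (P * A * P⁻¹) = spectrum K A := by
  lift P to (Matrix n n K)ˣ using (isUnit_iff_isUnit_det P).mpr hP
  rw [← coe_units_inv]
  exact spectrum.units_conjugate

theorem spectrum_inv_mul_mul_transpose_inv_sub_one {L : Matrix n n K} (hL : IsUnit L.det)
    (D : Matrix n n K) :
    spectrum K (L⁻¹ * D * Lᵀ⁻¹ - 1) = spectrum K (D * (L * Lᵀ)⁻¹ - 1) := by
  rw [← spectrum_mul_mul_nonsing_inv hL, mul_inv_rev, mul_sub, sub_mul, mul_one,
    mul_nonsing_inv L hL]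
  simp only [mul_assoc, mul_nonsing_inv_cancel_left L _ hL]

variable {V : Matrix n n K} (hV : Vᵀ * V = 1)
include hV

theorem det_conj_diagonal_of_transpose_mul_self (d : n → K) :
    (V * diagonal d * Vᵀ).det = ∏ i, d i := by
  have hdetV : Vᵀ.det * V.det = 1 := by rw [← det_mul, hV, det_one]
  rw [det_transpose] at hdetV
  rw [det_mul, det_mul, det_diagonal, det_transpose, mul_right_comm, hdetV, one_mul]

theorem conj_diagonal_mul_conj_diagonal_of_transpose_mul_self (a b : n → K) :
    V * diagonal a * Vᵀ * (V * diagonal b * Vᵀ) = V * diagonal (a * b) * Vᵀ := by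
  rw [show V * diagonal a * Vᵀ * (V * diagonal b * Vᵀ)
      = V * diagonal a * (Vᵀ * V) * diagonal b * Vᵀ by simp only [mul_assoc],
    hV, mul_one, mul_assoc V, diagonal_mul_diagonal]
  rfl

theorem conj_diagonal_sub_one_of_transpose_mul_self (a : n → K) :
    V * diagonal a * Vᵀ - 1 = V * diagonal (a - 1) * Vᵀ := by
  calc V * diagonal a * Vᵀ - 1 = V * diagonal a * Vᵀ - V * diagonal 1 * Vᵀ := by
        rw [diagonal_one', mul_one, mul_eq_one_comm.mp hV]
    _ = V * diagonal (a - 1) * Vᵀ := by rw [← sub_mul, ← mul_sub, diagonal_sub]; rfl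

end CommRing

section Field

variable [Field K] {V : Matrix n n K} (hV : Vᵀ * V = 1)
include hV

theorem inv_conj_diagonal_of_transpose_mul_self {a : n → K} (ha : ∀ i, a i ≠ 0) :
    (V * diagonal a * Vᵀ)⁻¹ = V * diagonal a⁻¹ * Vᵀ := by
  refine inv_eq_right_inv ?_
  rw [conj_diagonal_mul_conj_diagonal_of_transpose_mul_self hV,
    show a * a⁻¹ = 1 from funext fun i => mul_inv_cancel₀ (ha i), diagonal_one', mul_one,
    mul_eq_one_comm.mp hV]

theorem spectrum_conj_diagonal_of_transpose_mul_self (a : n → K) :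
    spectrum K (V * diagonal a * Vᵀ) = Set.range a := by
  rw [← inv_eq_left_inv hV, spectrum_mul_mul_nonsing_inv (isUnit_det_of_left_inverse hV),
    spectrum_diagonal]

end Field

end Matrix

section Ordered

variable {n K : Type*} [Fintype n] [DecidableEq n] [Field K] [LinearOrder K]
  [IsStrictOrderedRing K]

theorem Matrix.spectrum_inv_mul_mul_transpose_inv_sub_one_of_conj_abs
    {D V L : Matrix n n K} {d : n → K} (hV : Vᵀ * V = 1) (hspec : D = V * diagonal d * Vᵀ)
    (hL : IsUnit L.det) (hChol : V * diagonal (fun i => |d i|) * Vᵀ = L * Lᵀ) :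
    spectrum K (L⁻¹ * D * Lᵀ⁻¹ - 1) = Set.range fun i => d i / |d i| - 1 := by
  have habs : ∀ i, |d i| ≠ 0 := by
    have hLLt : IsUnit (L * Lᵀ).det := by rw [det_mul, det_transpose]; exact hL.mul hL
    rw [← hChol, det_conj_diagonal_of_transpose_mul_self hV, isUnit_iff_ne_zero,
      Finset.prod_ne_zero_iff] at hLLt
    exact fun i => hLLt i (Finset.mem_univ i)
  rw [spectrum_inv_mul_mul_transpose_inv_sub_one hL, ← hChol,
    inv_conj_diagonal_of_transpose_mul_self hV habs, hspec,
    conj_diagonal_mul_conj_diagonal_of_transpose_mul_self hV,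
    conj_diagonal_sub_one_of_transpose_mul_self hV, spectrum_conj_diagonal_of_transpose_mul_self hV]
  simp_rw [div_eq_mul_inv]
  rfl

theorem div_abs_sub_one_of_neg {x : K} (hx : x < 0) : x / |x| - 1 = -2 := by
  rw [abs_of_neg hx, div_neg_self hx.ne]
  norm_num

theorem div_abs_sub_one_of_pos {x : K} (hx : 0 < x) : x / |x| - 1 = 0 := by
  rw [abs_of_pos hx, div_self hx.ne', sub_self]

theorem range_div_abs_sub_one_of_mul_neg {d : Fin 2 → K} (hd : d 0 * d 1 < 0) :
    (Set.range fun i => d i / |d i| - 1) = {-2, 0} := by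
  ext x
  rcases mul_neg_iff.mp hd with ⟨h0, h1⟩ | ⟨h0, h1⟩ <;>
  simp [Fin.exists_fin_two, div_abs_sub_one_of_pos, div_abs_sub_one_of_neg, h0, h1, eq_comm,
    or_comm]

end Ordered

theorem inv_sqrt_neg_mul_mul_inv_sqrt_neg {e : ℝ} (he : e < 0) :
    (√(-e))⁻¹ * e * (√(-e))⁻¹ = -1 := by
  rw [mul_comm _ e, mul_assoc, ← mul_inv, Real.mul_self_sqrt (neg_nonneg.mpr he.le),
    ← div_eq_mul_inv, div_neg_self he.ne]

theorem stmt_7_general (D V L : Matrix (Fin 2) (Fin 2) ℝ) (d : Fin 2 → ℝ)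
    (hdet : D.det < 0)
    (hV : Vᵀ * V = 1) (hspec : D = V * Matrix.diagonal d * Vᵀ)
    (hL : IsUnit L.det)
    (hChol : V * Matrix.diagonal (fun i => |d i|) * Vᵀ = L * Lᵀ) :
    spectrum ℝ (L⁻¹ * D * (Lᵀ)⁻¹ - 1) = {-2, 0} ∧
      ∀ e : ℝ, e < 0 →
        (Real.sqrt (-e))⁻¹ * e * (Real.sqrt (-e))⁻¹ - 1 = -2 := by
  refine ⟨?_, fun e he => by rw [inv_sqrt_neg_mul_mul_inv_sqrt_neg he]; norm_num⟩
  have hd : d 0 * d 1 < 0 := by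
    rwa [hspec, det_conj_diagonal_of_transpose_mul_self hV, Fin.prod_univ_two] at hdet
  rw [spectrum_inv_mul_mul_transpose_inv_sub_one_of_conj_abs hV hspec hL hChol,
    range_div_abs_sub_one_of_mul_neg hd]

theorem stmt_7 (D V L : Matrix (Fin 2) (Fin 2) ℝ) (d : Fin 2 → ℝ)
    (hDsym : Dᵀ = D) (hdet : D.det < 0)
    (hV : Vᵀ * V = 1) (hspec : D = V * Matrix.diagonal d * Vᵀ)
    (hL : IsUnit L.det)
    (hChol : V * Matrix.diagonal (fun i => |d i|) * Vᵀ = L * Lᵀ) :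
    spectrum ℝ (L⁻¹ * D * (Lᵀ)⁻¹ - 1) = {-2, 0} ∧
      ∀ e : ℝ, e < 0 →
        (Real.sqrt (-e))⁻¹ * e * (Real.sqrt (-e))⁻¹ - 1 = -2 :=
  stmt_7_general D V L d hdet hV hspec hL hChol
end

section
/- Let J ∈ ℝ^{n×n} be skew-symmetric and let k ≥ 2. Suppose q₁, …, q_k ∈ ℝⁿ and α₁, …, α_{k−1} > 0 are generated by the skew-Lanczos process without breakdown: ‖q₁‖ = 1; α₁ = ‖J·q₁‖ ≠ 0 and q₂ = −J·q₁/α₁; and for 2 ≤ i ≤ k−1, α_i = ‖J·q_i − α_{i−1}·q_{i−1}‖ ≠ 0 and q_{i+1} = −(J·q_i − α_{i−1}·q_{i−1})/α_i. Then the vectors q₁, …, q_k are orthonormal, and with Q_k = [q₁, …, q_k] one has Qₖᵀ·J·Qₖ = S_k, where S_k is the tridiagonal skew-symmetric k×k matrix with (S_k)_{i,i+1} = α_i, (S_k)_{i+1,i} = −α_i, and all other entries zero. -/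
open Matrix

theorem stmt_13 {n : ℕ} (J : Matrix (Fin n) (Fin n) ℝ) (hJ : Jᵀ = -J)
    (k : ℕ) (hk : 2 ≤ k) (q : ℕ → (Fin n → ℝ)) (α : ℕ → ℝ)
    (hq1 : Real.sqrt (q 1 ⬝ᵥ q 1) = 1)
    (hαpos : ∀ i, 1 ≤ i → i ≤ k - 1 → 0 < α i)
    (hα1 : α 1 = Real.sqrt ((J *ᵥ q 1) ⬝ᵥ (J *ᵥ q 1)))
    (hq2 : q 2 = -((α 1)⁻¹ • (J *ᵥ q 1)))
    (hαi : ∀ i, 2 ≤ i → i ≤ k - 1 →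
      α i = Real.sqrt ((J *ᵥ q i - α (i - 1) • q (i - 1)) ⬝ᵥ
        (J *ᵥ q i - α (i - 1) • q (i - 1))))
    (hqi : ∀ i, 2 ≤ i → i ≤ k - 1 →
      q (i + 1) = -((α i)⁻¹ • (J *ᵥ q i - α (i - 1) • q (i - 1)))) :
    (∀ i j, 1 ≤ i → i ≤ k → 1 ≤ j → j ≤ k →
        q i ⬝ᵥ q j = if i = j then 1 else 0) ∧
      ∀ i j, 1 ≤ i → i ≤ k → 1 ≤ j → j ≤ k →
        q i ⬝ᵥ (J *ᵥ q j) =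
          if j = i + 1 then α i else if i = j + 1 then -α j else 0 := by
  -- basic tools
  have skew : ∀ v w : Fin n → ℝ, v ⬝ᵥ (J *ᵥ w) = -((J *ᵥ v) ⬝ᵥ w) := by
    intro v w
    rw [Matrix.dotProduct_mulVec, ← Matrix.mulVec_transpose, hJ, Matrix.neg_mulVec,
      neg_dotProduct]
  have selfskew : ∀ v : Fin n → ℝ, v ⬝ᵥ (J *ᵥ v) = 0 := by
    intro v
    have h := skew v v
    rw [dotProduct_comm (J *ᵥ v) v] at h
    linarith
  have nn : ∀ v : Fin n → ℝ, 0 ≤ v ⬝ᵥ v := fun v =>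
    Finset.sum_nonneg fun i _ => mul_self_nonneg (v i)
  have sqs : ∀ v : Fin n → ℝ, v ⬝ᵥ v = Real.sqrt (v ⬝ᵥ v) ^ 2 := fun v =>
    (Real.sq_sqrt (nn v)).symm
  have hα1pos : 0 < α 1 := hαpos 1 le_rfl (by omega)
  -- recurrences
  have recB : J *ᵥ q 1 = -(α 1 • q 2) := by
    rw [hq2, smul_neg, smul_smul, mul_inv_cancel₀ hα1pos.ne', one_smul, neg_neg]
  have recA : ∀ j, 2 ≤ j → j ≤ k - 1 →
      J *ᵥ q j = α (j - 1) • q (j - 1) - α j • q (j + 1) := by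
    intro j h2 hk1
    have hpos := hαpos j (by omega) hk1
    have h : α j • q (j + 1) = -(J *ᵥ q j - α (j - 1) • q (j - 1)) := by
      rw [hqi j h2 hk1, smul_neg, smul_smul, mul_inv_cancel₀ hpos.ne', one_smul]
    rw [h]
    abel
  -- squared norms
  have hq1q1 : q 1 ⬝ᵥ q 1 = 1 := by
    have := sqs (q 1); rw [hq1] at this; simpa using this
  have hJq1 : (J *ᵥ q 1) ⬝ᵥ (J *ᵥ q 1) = α 1 ^ 2 := by
    rw [hα1]; exact sqs _
  -- orthonormality up to m
  have main : ∀ m, 2 ≤ m → m ≤ k →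
      ∀ i j, 1 ≤ i → i ≤ m → 1 ≤ j → j ≤ m →
        q i ⬝ᵥ q j = if i = j then 1 else 0 := by
    intro m hm
    induction m, hm using Nat.le_induction with
    | base =>
      intro _ i j hi1 hi2 hj1 hj2
      have hq2q2 : q 2 ⬝ᵥ q 2 = 1 := by
        rw [hq2]
        simp only [dotProduct_neg, neg_dotProduct, dotProduct_smul, smul_dotProduct,
          smul_eq_mul, neg_neg]
        rw [hJq1, pow_two]
        field_simp
      have hq1q2 : q 1 ⬝ᵥ q 2 = 0 := by
        rw [hq2]
        simp only [dotProduct_neg, dotProduct_smul, smul_eq_mul]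
        rw [selfskew]
        ring
      have hq2q1 : q 2 ⬝ᵥ q 1 = 0 := by rw [dotProduct_comm]; exact hq1q2
      interval_cases i <;> interval_cases j <;> simp [hq1q1, hq2q2, hq1q2, hq2q1]
    | succ m hm ih =>
      intro hmk
      have hO := ih (by omega)
      set r : Fin n → ℝ := J *ᵥ q m - α (m - 1) • q (m - 1) with hr
      have hqm1 : q (m + 1) = -((α m)⁻¹ • r) := hqi m hm (by omega)
      have hαm : α m = Real.sqrt (r ⬝ᵥ r) := hαi m hm (by omega)
      have hαmpos : 0 < α m := hαpos m (by omega) (by omega)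
      have rr : r ⬝ᵥ r = α m ^ 2 := by rw [hαm]; exact sqs r
      -- the key inner products with J *ᵥ q m
      have hd : ∀ i, 1 ≤ i → i ≤ m →
          q i ⬝ᵥ (J *ᵥ q m) = if i + 1 = m then α i else 0 := by
        intro i hi1 hi2
        rcases eq_or_lt_of_le hi2 with heq | hlt
        · rw [heq, selfskew, if_neg (show ¬ (m + 1 = m) by omega)]
        · rcases Nat.lt_or_ge i 2 with h1 | h2
          · have hi : i = 1 := by omega
            rw [hi, skew, recB]
            simp only [neg_dotProduct, smul_dotProduct, smul_eq_mul, neg_neg]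
            rw [hO 2 m (by omega) (by omega) (by omega) (by omega)]
            by_cases h2m : (2 : ℕ) = m
            · rw [if_pos h2m, if_pos (show 1 + 1 = m by omega)]; ring
            · rw [if_neg h2m, if_neg (show ¬ (1 + 1 = m) by omega)]; ring
          · rw [skew, recA i h2 (by omega)]
            simp only [sub_dotProduct, smul_dotProduct, smul_eq_mul]
            rw [hO (i - 1) m (by omega) (by omega) (by omega) (by omega),
              hO (i + 1) m (by omega) (by omega) (by omega) (by omega),
              if_neg (show ¬ (i - 1 = m) by omega)]
            by_cases h1m : i + 1 = m
            · rw [if_pos h1m, if_pos h1m]; ring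
            · rw [if_neg h1m, if_neg h1m]; ring
      have qir : ∀ i, 1 ≤ i → i ≤ m → q i ⬝ᵥ r = 0 := by
        intro i hi1 hi2
        rw [hr]
        simp only [dotProduct_sub, dotProduct_smul, smul_eq_mul]
        rw [hd i hi1 hi2, hO i (m - 1) hi1 hi2 (by omega) (by omega)]
        by_cases h : i + 1 = m
        · rw [if_pos h, if_pos (show i = m - 1 by omega)]
          have h' : m - 1 = i := by omega
          rw [h']
          ring
        · rw [if_neg h, if_neg (show ¬ (i = m - 1) by omega)]; ring
      have qnew : ∀ i, 1 ≤ i → i ≤ m → q i ⬝ᵥ q (m + 1) = 0 := by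
        intro i hi1 hi2
        rw [hqm1]
        simp only [dotProduct_neg, dotProduct_smul, smul_eq_mul]
        rw [qir i hi1 hi2]; ring
      have qnewnew : q (m + 1) ⬝ᵥ q (m + 1) = 1 := by
        rw [hqm1]
        simp only [dotProduct_neg, neg_dotProduct, dotProduct_smul, smul_dotProduct,
          smul_eq_mul, neg_neg]
        rw [rr, pow_two]
        field_simp
      intro i j hi1 hi2 hj1 hj2
      rcases Nat.lt_or_ge i (m + 1) with hi | hi
      · rcases Nat.lt_or_ge j (m + 1) with hj | hj
        · exact hO i j hi1 (by omega) hj1 (by omega)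
        · have hj' : j = m + 1 := by omega
          rw [hj', qnew i hi1 (by omega), if_neg (show ¬ (i = m + 1) by omega)]
      · have hi' : i = m + 1 := by omega
        rcases Nat.lt_or_ge j (m + 1) with hj | hj
        · rw [hi', dotProduct_comm, qnew j hj1 (by omega),
            if_neg (show ¬ (m + 1 = j) by omega)]
        · have hj' : j = m + 1 := by omega
          rw [hi', hj', qnewnew, if_pos rfl]
  have hOk := main k hk le_rfl
  refine ⟨hOk, ?_⟩
  -- second part: for j ≤ k - 1 first
  have key : ∀ i j, 1 ≤ i → i ≤ k → 1 ≤ j → j ≤ k - 1 →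
      q i ⬝ᵥ (J *ᵥ q j) = if j = i + 1 then α i else if i = j + 1 then -α j else 0 := by
    intro i j hi1 hi2 hj1 hj2
    rcases Nat.lt_or_ge j 2 with hj2' | hj2'
    · have hj : j = 1 := by omega
      subst hj
      rw [recB, dotProduct_neg, dotProduct_smul, smul_eq_mul,
        hOk i 2 hi1 hi2 (by omega) (by omega)]
      by_cases h2 : i = 2
      · rw [if_pos h2, if_neg (show ¬ (1 = i + 1) by omega),
          if_pos (show i = 1 + 1 by omega)]
        ring
      · rw [if_neg h2, if_neg (show ¬ (1 = i + 1) by omega),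
          if_neg (show ¬ (i = 1 + 1) by omega)]
        ring
    · rw [recA j hj2' hj2, dotProduct_sub, dotProduct_smul,
        dotProduct_smul, smul_eq_mul, smul_eq_mul,
        hOk i (j - 1) hi1 hi2 (by omega) (by omega),
        hOk i (j + 1) hi1 hi2 (by omega) (by omega)]
      by_cases h1 : i = j - 1
      · rw [if_pos h1, if_neg (show ¬ (i = j + 1) by omega),
          if_pos (show j = i + 1 by omega), h1]
        ring
      · by_cases h2 : i = j + 1
        · rw [if_neg h1, if_pos h2, if_neg (show ¬ (j = i + 1) by omega), if_pos h2]
          ring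
        · rw [if_neg h1, if_neg h2, if_neg (show ¬ (j = i + 1) by omega), if_neg h2]
          ring
  intro i j hi1 hi2 hj1 hj2
  rcases Nat.lt_or_ge j k with hj | hj
  · exact key i j hi1 hi2 hj1 (by omega)
  · have hj' : j = k := by omega
    rcases Nat.lt_or_ge i k with hi | hi
    · rw [skew, dotProduct_comm, key j i hj1 hj2 hi1 (by omega)]
      by_cases h1 : j = i + 1
      · rw [if_neg (show ¬ (i = j + 1) by omega), if_pos h1, if_pos h1]
        ring
      · rw [if_neg (show ¬ (i = j + 1) by omega), if_neg h1, if_neg h1,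
          if_neg (show ¬ (i = j + 1) by omega)]
        ring
    · have hij : i = j := by omega
      have hne : ¬ (j = j + 1) := by omega
      rw [hij, selfskew, if_neg hne, if_neg hne]
end
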